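/- For any equivariant sheaf (r : R → X_T, ρ) on the topological groupoid G_T ⇉ X_T, the action ρ : G_T ×_{X_T} R → R is an open map; consequently, for any open subset U ⊆ R, its stabilization {ρ((M,N,f), x) | x ∈ U, (M,N,f) ∈ G_T, r(x) = M} is an open subset of R. -/

import Mathlib

open FirstOrder FirstOrder.Language Set Topology

universe u v w x

variable {L : FirstOrder.Language.{u, v}} {α : Type w}

/-- A model of `T` whose carrier is a subset of `α`: an element of the set `X_T` of
small models of `T`. -/
structure SmallModel (L : FirstOrder.Language.{u, v}) (α : Type w) (T : L.Theory) where
  carrier : Set α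
  struc : L.Structure carrier
  models : @FirstOrder.Language.Theory.Model L carrier struc T

/-- `M.Sat φ v` means that the formula `φ` is realized in the small model `M`
at the valuation `v`. -/
def SmallModel.Sat {T : L.Theory} (M : SmallModel L α T) {ι : Type*}
    (φ : L.Formula ι) (v : ι → M.carrier) : Prop :=
  letI := M.struc
  φ.Realize v

/-- The basic open set `⟨φ, b⟩ ⊆ X_T`. -/
def XBasic {T : L.Theory} {n : ℕ} (φ : L.Formula (Fin n)) (b : Fin n → α) :
    Set (SmallModel L α T) :=
  {M | ∃ h : ∀ i, b i ∈ M.carrier, M.Sat φ fun i => ⟨b i, h i⟩}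

/-- The logical topology on `X_T`, generated by the sets `⟨φ, b⟩`. -/
instance SmallModel.instTopologicalSpace {T : L.Theory} :
    TopologicalSpace (SmallModel L α T) :=
  TopologicalSpace.generateFrom
    {U | ∃ (n : ℕ) (φ : L.Formula (Fin n)) (b : Fin n → α), U = XBasic φ b}

/-- Isomorphisms of `L`-structures between two small models. -/
abbrev StrEquiv {T : L.Theory} (A B : SmallModel L α T) : Type _ :=
  @FirstOrder.Language.Equiv L A.carrier B.carrier A.struc B.struc

/-- The underlying function of an isomorphism of small models. -/
def StrEquiv.fn {T : L.Theory} {A B : SmallModel L α T} (f : StrEquiv A B) :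
    A.carrier → B.carrier :=
  (@FirstOrder.Language.Equiv.toEquiv L A.carrier B.carrier A.struc B.struc f)

/-- Composition of isomorphisms of small models. -/
def StrEquiv.comp {T : L.Theory} {A B C : SmallModel L α T}
    (g : StrEquiv B C) (f : StrEquiv A B) : StrEquiv A C :=
  letI := A.struc; letI := B.struc; letI := C.struc
  FirstOrder.Language.Equiv.comp g f

/-- An element of `G_T`: a triple `(M, N, f)` with `M, N ∈ X_T` and `f : M ≅ N` an
isomorphism of `L`-structures. -/
structure ModelIso (L : FirstOrder.Language.{u, v}) (α : Type w) (T : L.Theory) where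
  src : SmallModel L α T
  tgt : SmallModel L α T
  iso : StrEquiv src tgt

/-- The basic open set `⟨a ↦ b⟩ ⊆ G_T`. -/
def GMapsTo {T : L.Theory} (a b : α) : Set (ModelIso L α T) :=
  {g | ∃ h : a ∈ g.src.carrier, (StrEquiv.fn g.iso ⟨a, h⟩ : α) = b}

/-- The logical topology on `G_T`, generated by the sets `s⁻¹⟨φ, b⟩`, `t⁻¹⟨φ, b⟩` and
`⟨a ↦ b⟩`. -/
instance ModelIso.instTopologicalSpace {T : L.Theory} :
    TopologicalSpace (ModelIso L α T) :=
  TopologicalSpace.generateFrom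
    ({U | ∃ (n : ℕ) (φ : L.Formula (Fin n)) (b : Fin n → α),
        U = ModelIso.src ⁻¹' XBasic φ b} ∪
     {U | ∃ (n : ℕ) (φ : L.Formula (Fin n)) (b : Fin n → α),
        U = ModelIso.tgt ⁻¹' XBasic φ b} ∪
     {U | ∃ a b : α, U = GMapsTo (T := T) a b})

/-- The identity arrow of `G_T` at a model `M`. -/
def ModelIso.idIso {T : L.Theory} (M : SmallModel L α T) : ModelIso L α T :=
  ⟨M, M, letI := M.struc; FirstOrder.Language.Equiv.refl L M.carrier⟩

/-- The inverse of an arrow of `G_T`. -/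
def ModelIso.invIso {T : L.Theory} (g : ModelIso L α T) : ModelIso L α T :=
  ⟨g.tgt, g.src, letI := g.src.struc; letI := g.tgt.struc;
    FirstOrder.Language.Equiv.symm g.iso⟩

/-- An equivariant sheaf `(r : R → X_T, ρ)` on the topological groupoid `G_T ⇉ X_T`:
a local homeomorphism `r` into `X_T` together with a continuous action `ρ` of `G_T`. -/
structure EquivSheaf (L : FirstOrder.Language.{u, v}) (α : Type w) (T : L.Theory) where
  /-- The total space. -/
  R : Type x
  [topR : TopologicalSpace R]
  /-- The projection to the space of models. -/
  r : R → SmallModel L α T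
  isLocalHomeomorph_r : IsLocalHomeomorph r
  /-- The action `ρ : G_T ×_{X_T} R → R`, defined on the set of pairs `((M,N,f), z)`
  with `r z = M`, topologized as a subspace of the product. -/
  act : {q : ModelIso L α T × R // r q.2 = q.1.src} → R
  continuous_act : Continuous act
  r_act : ∀ q, r (act q) = q.1.1.tgt
  act_id : ∀ z : R, act ⟨(ModelIso.idIso (r z), z), rfl⟩ = z
  act_comp : ∀ (A B C : SmallModel L α T) (f : StrEquiv A B) (g : StrEquiv B C)
      (z : R) (hz : r z = A),
    act ⟨((⟨B, C, g⟩ : ModelIso L α T),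
          act ⟨((⟨A, B, f⟩ : ModelIso L α T), z), hz⟩), r_act _⟩ =
      act ⟨((⟨A, C, StrEquiv.comp g f⟩ : ModelIso L α T), z), hz⟩

attribute [instance] EquivSheaf.topR

/-- The stabilization of a subset of the total space of an equivariant sheaf under the
action of the groupoid. -/
def EquivSheaf.stabSet {T : L.Theory} (E : EquivSheaf L α T) (U : Set E.R) : Set E.R :=
  {y | ∃ q : {q : ModelIso L α T × E.R // E.r q.2 = q.1.src}, q.1.2 ∈ U ∧ E.act q = y}

/-! The action factors as `ρ = pr₂ ∘ τ`, where `τ (g, x) = (g⁻¹, g • x)` is a continuous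
involution of `G_T ×_{X_T} R`, hence a homeomorphism. The projection `pr₂` is the pullback along
`r` of the source map `s : G_T → X_T`, so it is open as soon as `s` is. The image under `s` of a
basic open set `s⁻¹⟨φ, c⃗⟩ ∩ t⁻¹⟨ψ, d⃗⟩ ∩ ⋂ᵢ ⟨aᵢ ↦ bᵢ⟩` is `⟨φ, c⃗⟩ ∩ ⟨χ, a⃗⟩`, where `χ(x⃗)`
says that some `y⃗` satisfies `ψ` and `(x⃗, y⃗)` has the equality type of `(b⃗, d⃗)`: given such a
witness in a model `M`, a permutation of `α` sending `(a⃗, y⃗)` to `(b⃗, d⃗)` transports `M` to an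
isomorphic model and yields the required arrow. -/

theorem isOpenMap_pullback_snd {X Y Z : Type*} [TopologicalSpace X] [TopologicalSpace Y]
    [TopologicalSpace Z] {f : Y → X} {r : Z → X} (hf : IsOpenMap f) (hr : Continuous r) :
    IsOpenMap fun q : {q : Y × Z // r q.2 = f q.1} => q.1.2 := by
  refine ((TopologicalSpace.isTopologicalBasis_opens.prod
    TopologicalSpace.isTopologicalBasis_opens).isInducing .subtypeVal).isOpenMap_iff.2 ?_
  rintro _ ⟨_, ⟨Ω, hΩ, V, hV, rfl⟩, rfl⟩
  have himage : (fun q : {q : Y × Z // r q.2 = f q.1} => q.1.2) '' (Subtype.val ⁻¹' Ω ×ˢ V) =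
      V ∩ r ⁻¹' (f '' Ω) := by
    ext z
    constructor
    · rintro ⟨⟨⟨y, z⟩, hyz⟩, ⟨hy, hz⟩, rfl⟩
      exact ⟨hz, y, hy, hyz.symm⟩
    · rintro ⟨hz, y, hy, hyz⟩
      exact ⟨⟨(y, z), hyz.symm⟩, ⟨hy, hz⟩, rfl⟩
  change IsOpen (_ '' (Subtype.val ⁻¹' (Ω ×ˢ V)))
  rw [himage]
  exact hV.inter ((hf Ω hΩ).preimage hr)

open Cardinal in
theorem exists_perm_extend_of_finite {s : Set α} [Finite s] (f : s ↪ α) :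
    ∃ σ : Equiv.Perm α, ∀ x : s, σ x = f x := by
  rcases finite_or_infinite α with hα | hα
  · exact extend_function_finite f ⟨Equiv.refl α⟩
  · refine extend_function f (Cardinal.eq.1 (mk_compl_eq_mk_compl_infinite ?_ ?_))
    · exact (lt_aleph0_of_finite s).trans_le (aleph0_le_mk α)
    · exact (lt_aleph0_of_finite (Set.range f)).trans_le (aleph0_le_mk α)

theorem exists_perm_comp_eq {ι : Type*} [Finite ι] {u t : ι → α}
    (h : ∀ i j, u i = u j ↔ t i = t j) : ∃ σ : Equiv.Perm α, σ ∘ u = t := by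
  let f : Set.range u ↪ α := ⟨fun x => t x.2.choose, fun x y hxy => Subtype.ext <| by
    rw [← x.2.choose_spec, ← y.2.choose_spec]
    exact (h _ _).2 hxy⟩
  obtain ⟨σ, hσ⟩ := exists_perm_extend_of_finite f
  refine ⟨σ, funext fun i => (hσ ⟨u i, i, rfl⟩).trans ?_⟩
  exact (h _ _).1 (Set.mem_range_self (f := u) i).choose_spec

namespace FirstOrder.Language.Formula

variable {ι κ β M : Type*} [Finite ι] [Finite κ] [L.Structure M]

open Classical in
noncomputable def equalityType (e : ι → β) : L.Formula ι :=
  Formula.iInf fun p : ι × ι =>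
    if e p.1 = e p.2 then Term.equal (var p.1) (var p.2) else (Term.equal (var p.1) (var p.2)).not

theorem realize_equalityType (e : ι → β) (v : ι → M) :
    (equalityType (L := L) e).Realize v ↔ ∀ i j, v i = v j ↔ e i = e j := by
  simp only [equalityType, Formula.iInf, Formula.Realize, BoundedFormula.realize_iInf, Prod.forall]
  refine forall₂_congr fun i j => ?_
  split_ifs with he <;> simp [he, Term.equal]

noncomputable def exsWithEqualityType (ψ : L.Formula κ) (b : ι → β) (d : κ → β) : L.Formula ι :=
  ((ψ.relabel Sum.inr) ⊓ equalityType (Sum.elim b d)).iExs κ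

theorem realize_exsWithEqualityType (ψ : L.Formula κ) (b : ι → β) (d : κ → β) (v : ι → M) :
    (exsWithEqualityType ψ b d).Realize v ↔ ∃ w : κ → M, ψ.Realize w ∧
      ∀ i j, Sum.elim v w i = Sum.elim v w j ↔ Sum.elim b d i = Sum.elim b d j := by
  simp only [exsWithEqualityType, realize_iExs, realize_inf, realize_relabel,
    realize_equalityType, Sum.elim_comp_inr]

end FirstOrder.Language.Formula

section SmallModel

variable {T : L.Theory}

theorem mem_XBasic_iff {n : ℕ} {φ : L.Formula (Fin n)} {b : Fin n → α} {M : SmallModel L α T} :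
    M ∈ XBasic φ b ↔ ∃ v : Fin n → M.carrier, Subtype.val ∘ v = b ∧ M.Sat φ v := by
  constructor
  · rintro ⟨_, hφ⟩
    exact ⟨_, rfl, hφ⟩
  · rintro ⟨v, rfl, hφ⟩
    exact ⟨fun i => (v i).2, hφ⟩

theorem isOpen_XBasic {n : ℕ} (φ : L.Formula (Fin n)) (b : Fin n → α) :
    IsOpen (XBasic (T := T) φ b) :=
  TopologicalSpace.isOpen_generateFrom_of_mem ⟨n, φ, b, rfl⟩

theorem XBasic_top : XBasic (T := T) (⊤ : L.Formula (Fin 0)) (Fin.elim0 : Fin 0 → α) = univ :=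
  eq_univ_of_forall fun M => mem_XBasic_iff.2
    ⟨Fin.elim0, funext fun i => i.elim0, by let := M.struc; simp [SmallModel.Sat]⟩

theorem XBasic_inter_XBasic {n m : ℕ} (φ : L.Formula (Fin n)) (b : Fin n → α)
    (ψ : L.Formula (Fin m)) (c : Fin m → α) :
    XBasic (T := T) φ b ∩ XBasic ψ c =
      XBasic (φ.relabel (Fin.castAdd m) ⊓ ψ.relabel (Fin.natAdd n)) (Fin.append b c) := by
  ext M
  let := M.struc
  simp only [mem_inter_iff, mem_XBasic_iff, SmallModel.Sat, Formula.realize_inf,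
    Formula.realize_relabel]
  constructor
  · rintro ⟨⟨v, rfl, hφ⟩, w, rfl, hψ⟩
    refine ⟨Fin.append v w, funext (Fin.addCases (by simp) (by simp)), ?_, ?_⟩
    · convert hφ using 1; exact funext (Fin.append_left v w)
    · convert hψ using 1; exact funext (Fin.append_right v w)
  · rintro ⟨v, hv, hφ, hψ⟩
    exact ⟨⟨_, funext fun i => by simpa using congrFun hv (Fin.castAdd m i), hφ⟩,
      _, funext fun i => by simpa using congrFun hv (Fin.natAdd n i), hψ⟩

end SmallModel

section ModelIso

variable {T : L.Theory}

theorem StrEquiv.bijective_fn {A B : SmallModel L α T} (f : StrEquiv A B) :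
    Function.Bijective (StrEquiv.fn f) :=
  let := A.struc; let := B.struc; f.toEquiv.bijective

theorem ModelIso.sat_tgt_iff (g : ModelIso L α T) {ι : Type*} (φ : L.Formula ι)
    (v : ι → g.src.carrier) : g.tgt.Sat φ (StrEquiv.fn g.iso ∘ v) ↔ g.src.Sat φ v :=
  let := g.src.struc; let := g.tgt.struc; StrongHomClass.realize_formula g.iso φ

def ModelIso.ofEquiv (M : SmallModel L α T) {D : Set α} (e : M.carrier ≃ D) : ModelIso L α T :=
  letI := M.struc
  haveI := M.models
  letI : L.Structure D := e.inducedStructure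
  ⟨M, ⟨D, _, StrongHomClass.theory_model e.inducedStructureEquiv⟩, e.inducedStructureEquiv⟩

def ModelIso.subbasis : Set (Set (ModelIso L α T)) :=
  {U | ∃ (n : ℕ) (φ : L.Formula (Fin n)) (b : Fin n → α), U = ModelIso.src ⁻¹' XBasic φ b} ∪
  {U | ∃ (n : ℕ) (φ : L.Formula (Fin n)) (b : Fin n → α), U = ModelIso.tgt ⁻¹' XBasic φ b} ∪
  {U | ∃ a b : α, U = GMapsTo (T := T) a b}

def ModelIso.basicOpen {n m k : ℕ} (φ : L.Formula (Fin n)) (c : Fin n → α)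
    (ψ : L.Formula (Fin m)) (d : Fin m → α) (a b : Fin k → α) : Set (ModelIso L α T) :=
  src ⁻¹' XBasic φ c ∩ tgt ⁻¹' XBasic ψ d ∩ ⋂ i, GMapsTo (a i) (b i)

theorem ModelIso.exists_sInter_eq_basicOpen {F : Set (Set (ModelIso L α T))} (hF : F.Finite)
    (hFS : F ⊆ subbasis) :
    ∃ (n : ℕ) (φ : L.Formula (Fin n)) (c : Fin n → α) (m : ℕ) (ψ : L.Formula (Fin m))
      (d : Fin m → α) (k : ℕ) (a b : Fin k → α), ⋂₀ F = basicOpen φ c ψ d a b := by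
  induction F, hF using Set.Finite.induction_on with
  | empty =>
    refine ⟨0, ⊤, Fin.elim0, 0, ⊤, Fin.elim0, 0, Fin.elim0, Fin.elim0, ?_⟩
    simp [basicOpen, XBasic_top]
  | @insert U F _ _ ih =>
    obtain ⟨n, φ, c, m, ψ, d, k, a, b, hF⟩ := ih (subset_insert U F |>.trans hFS)
    rw [sInter_insert, hF]
    rcases hFS (mem_insert U F) with (⟨n', φ', c', rfl⟩ | ⟨m', ψ', d', rfl⟩) | ⟨a', b', rfl⟩
    · refine ⟨_, φ'.relabel (Fin.castAdd n) ⊓ φ.relabel (Fin.natAdd n'), Fin.append c' c,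
        m, ψ, d, k, a, b, ?_⟩
      rw [basicOpen, basicOpen, ← XBasic_inter_XBasic φ' c' φ c, preimage_inter]
      ext
      simp only [mem_inter_iff]
      tauto
    · refine ⟨n, φ, c, _, ψ'.relabel (Fin.castAdd m) ⊓ ψ.relabel (Fin.natAdd m'),
        Fin.append d' d, k, a, b, ?_⟩
      rw [basicOpen, basicOpen, ← XBasic_inter_XBasic ψ' d' ψ d, preimage_inter]
      ext
      simp only [mem_inter_iff]
      tauto
    · refine ⟨n, φ, c, m, ψ, d, k + 1, Fin.cons a' a, Fin.cons b' b, ?_⟩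
      ext g
      simp only [basicOpen, mem_inter_iff, mem_iInter, Fin.forall_fin_succ, Fin.cons_zero,
        Fin.cons_succ]
      tauto

theorem ModelIso.image_src_basicOpen {n m k : ℕ} (φ : L.Formula (Fin n)) (c : Fin n → α)
    (ψ : L.Formula (Fin m)) (d : Fin m → α) (a b : Fin k → α) :
    src '' basicOpen (T := T) φ c ψ d a b =
      XBasic φ c ∩ XBasic (ψ.exsWithEqualityType b d) a := by
  ext M
  constructor
  · rintro ⟨g, ⟨⟨hφ, hψ⟩, hab⟩, rfl⟩
    obtain ⟨w, rfl, hψw⟩ := mem_XBasic_iff.1 hψ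
    choose ha hab using mem_iInter.1 hab
    obtain ⟨w', rfl⟩ := (StrEquiv.bijective_fn g.iso).2.comp_left w
    have hpat : Subtype.val ∘ StrEquiv.fn g.iso ∘ Sum.elim (fun i => ⟨a i, ha i⟩) w' =
        Sum.elim b (Subtype.val ∘ StrEquiv.fn g.iso ∘ w') := by
      ext (i | j)
      exacts [hab i, rfl]
    let := g.src.struc
    refine ⟨hφ, ha, (Formula.realize_exsWithEqualityType ψ b _ _).2
      ⟨w', (g.sat_tgt_iff ψ w').1 hψw, fun i j => ?_⟩⟩
    rw [← hpat]
    exact (Subtype.val_injective.comp (StrEquiv.bijective_fn g.iso).1).eq_iff.symm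
  · rintro ⟨hφ, hχ⟩
    obtain ⟨v, rfl, hχv⟩ := mem_XBasic_iff.1 hχ
    let := M.struc
    obtain ⟨w, hψ, hpat⟩ := (Formula.realize_exsWithEqualityType ψ b d v).1 hχv
    obtain ⟨σ, hσ⟩ := exists_perm_comp_eq (u := Subtype.val ∘ Sum.elim v w)
      fun i j => Subtype.val_injective.eq_iff.trans (hpat i j)
    refine ⟨ofEquiv M (σ.image M.carrier), ⟨⟨hφ, ?_⟩, mem_iInter.2 fun i => ?_⟩, rfl⟩
    · exact mem_XBasic_iff.2 ⟨StrEquiv.fn (ofEquiv M (σ.image M.carrier)).iso ∘ w,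
        funext fun j => congrFun hσ (.inr j),
        ((ofEquiv M (σ.image M.carrier)).sat_tgt_iff ψ w).2 hψ⟩
    · exact ⟨(v i).2, congrFun hσ (.inl i)⟩

theorem ModelIso.isOpenMap_src : IsOpenMap (src : ModelIso L α T → SmallModel L α T) := by
  refine (TopologicalSpace.isTopologicalBasis_of_subbasis (s := subbasis) rfl).isOpenMap_iff.2 ?_
  rintro _ ⟨F, ⟨hF, hFS⟩, rfl⟩
  obtain ⟨n, φ, c, m, ψ, d, k, a, b, hFeq⟩ := exists_sInter_eq_basicOpen hF hFS
  dsimp only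
  rw [hFeq, image_src_basicOpen]
  exact (isOpen_XBasic _ _).inter (isOpen_XBasic _ _)

theorem ModelIso.invIso_mem_GMapsTo {g : ModelIso L α T} {a b : α} :
    g.invIso ∈ GMapsTo a b ↔ g ∈ GMapsTo b a := by
  let := g.src.struc
  let := g.tgt.struc
  change (∃ h, (g.iso.toEquiv.symm ⟨a, h⟩ : α) = b) ↔ ∃ h, (g.iso.toEquiv ⟨b, h⟩ : α) = a
  constructor
  · rintro ⟨ha, rfl⟩
    exact ⟨(g.iso.toEquiv.symm ⟨a, ha⟩).2, by simp⟩
  · rintro ⟨hb, rfl⟩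
    exact ⟨(g.iso.toEquiv ⟨b, hb⟩).2, by simp⟩

theorem ModelIso.continuous_invIso : Continuous (invIso : ModelIso L α T → ModelIso L α T) := by
  refine continuous_generateFrom_iff.2 ?_
  rintro _ ((⟨n, φ, c, rfl⟩ | ⟨n, φ, c, rfl⟩) | ⟨a, b, rfl⟩)
  · exact TopologicalSpace.isOpen_generateFrom_of_mem (.inl (.inr ⟨n, φ, c, rfl⟩))
  · exact TopologicalSpace.isOpen_generateFrom_of_mem (.inl (.inl ⟨n, φ, c, rfl⟩))
  · rw [show invIso ⁻¹' GMapsTo a b = GMapsTo (T := T) b a from ext fun _ => invIso_mem_GMapsTo]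
    exact TopologicalSpace.isOpen_generateFrom_of_mem (.inr ⟨b, a, rfl⟩)

theorem ModelIso.invIso_invIso (g : ModelIso L α T) : g.invIso.invIso = g := by
  obtain ⟨A, B, f⟩ := g
  let := A.struc
  let := B.struc
  exact congrArg (ModelIso.mk A B) f.symm_symm

end ModelIso

namespace EquivSheaf

variable {T : L.Theory} (E : EquivSheaf L α T)

theorem act_idIso {M : SmallModel L α T} (x : E.R) (hx : E.r x = M) :
    E.act ⟨(ModelIso.idIso M, x), hx⟩ = x := by
  subst hx
  exact E.act_id x

theorem act_invIso (q : {q : ModelIso L α T × E.R // E.r q.2 = q.1.src}) :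
    E.act ⟨(q.1.1.invIso, E.act q), E.r_act q⟩ = q.1.2 := by
  obtain ⟨⟨⟨A, B, f⟩, x⟩, hx⟩ := q
  let := A.struc
  let := B.struc
  refine (E.act_comp A B A f f.symm x hx).trans ?_
  rw [show StrEquiv.comp f.symm f = Language.Equiv.refl L A.carrier from f.symm_comp_self]
  exact E.act_idIso x hx

def reverse (q : {q : ModelIso L α T × E.R // E.r q.2 = q.1.src}) :
    {q : ModelIso L α T × E.R // E.r q.2 = q.1.src} :=
  ⟨(q.1.1.invIso, E.act q), E.r_act q⟩

theorem reverse_involutive : Function.Involutive E.reverse :=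
  fun q => Subtype.ext (Prod.ext q.1.1.invIso_invIso (E.act_invIso q))

theorem continuous_reverse : Continuous E.reverse :=
  ((ModelIso.continuous_invIso.comp (continuous_fst.comp continuous_subtype_val)).prodMk
    E.continuous_act).subtype_mk _

end EquivSheaf

/-- **The action of an equivariant sheaf is open**: for any equivariant sheaf
`(r : R → X_T, ρ)` on `G_T ⇉ X_T`, the action `ρ : G_T ×_{X_T} R → R` is an open map;
consequently the stabilization of any open subset of `R` is open. -/
theorem equivSheaf_act_isOpenMap {T : L.Theory} (E : EquivSheaf.{u, v, w, x} L α T) :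
    IsOpenMap E.act ∧ ∀ U : Set E.R, IsOpen U → IsOpen (E.stabSet U) := by
  have hact : IsOpenMap E.act :=
    (isOpenMap_pullback_snd ModelIso.isOpenMap_src E.isLocalHomeomorph_r.continuous).comp
      (.of_inverse E.continuous_reverse E.reverse_involutive E.reverse_involutive)
  exact ⟨hact, fun U hU => hact _ (hU.preimage (continuous_snd.comp continuous_subtype_val))⟩
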